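/- arXiv:2109.11575 — 3 statements merged into one kernel-verified Lean document; each statement's English description precedes it below -/
import Mathlib

section
/- Let f : S^m → ℝ be a continuous odd map. If m ≥ 1, then there exist two distinct, non-antipodal points p₁, p₂ ∈ S^m with ⟨p₁, p₂⟩ = 0 (orthogonal) such that f(p₁) = f(p₂). -/
open Real

theorem stmt_5 (m : ℕ) (hm : 1 ≤ m)
    (f : Metric.sphere (0 : EuclideanSpace ℝ (Fin (m+1))) 1 → ℝ)
    (hf : Continuous f) (hodd : ∀ p, f (-p) = -f p) :
    ∃ p₁ p₂ : Metric.sphere (0 : EuclideanSpace ℝ (Fin (m+1))) 1,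
      p₁ ≠ p₂ ∧ p₁ ≠ -p₂ ∧
      (inner ℝ (p₁ : EuclideanSpace ℝ (Fin (m+1))) (p₂ : EuclideanSpace ℝ (Fin (m+1))) : ℝ) = 0 ∧
      f p₁ = f p₂ := by
  have h0 : (0:ℕ) < m + 1 := by omega
  have h1 : (1:ℕ) < m + 1 := by omega
  set i0 : Fin (m+1) := ⟨0, h0⟩ with hi0
  set i1 : Fin (m+1) := ⟨1, h1⟩ with hi1
  have hne : i0 ≠ i1 := Fin.ne_of_val_ne (by simp)
  set E0 : EuclideanSpace ℝ (Fin (m+1)) := EuclideanSpace.single i0 1 with hE0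
  set E1 : EuclideanSpace ℝ (Fin (m+1)) := EuclideanSpace.single i1 1 with hE1
  set u : ℝ → EuclideanSpace ℝ (Fin (m+1)) :=
    fun θ => Real.cos θ • E0 + Real.sin θ • E1 with hu
  have hinner : ∀ a b : ℝ, (inner ℝ (u a) (u b) : ℝ) = Real.cos (a - b) := by
    intro a b
    simp only [hu, hE0, hE1, inner_add_left, inner_add_right, real_inner_smul_left,
      real_inner_smul_right, EuclideanSpace.inner_single_left, EuclideanSpace.single_apply,
      hne, hne.symm, if_true, if_false, eq_self_iff_true, map_one]
    rw [Real.cos_sub]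
    simp
    ring
  have hmem : ∀ θ : ℝ, u θ ∈ Metric.sphere (0 : EuclideanSpace ℝ (Fin (m+1))) 1 := by
    intro θ
    rw [mem_sphere_zero_iff_norm]
    have h := hinner θ θ
    rw [sub_self, Real.cos_zero, real_inner_self_eq_norm_mul_norm] at h
    have hnn : (0:ℝ) ≤ ‖u θ‖ := norm_nonneg _
    nlinarith
  set c : ℝ → Metric.sphere (0 : EuclideanSpace ℝ (Fin (m+1))) 1 :=
    fun θ => ⟨u θ, hmem θ⟩ with hc
  have hcc : Continuous c := by
    apply Continuous.subtype_mk
    exact (Real.continuous_cos.smul continuous_const).add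
      (Real.continuous_sin.smul continuous_const)
  have hcneg : ∀ θ : ℝ, c (θ + π) = -c θ := by
    intro θ
    apply Subtype.ext
    show u (θ + π) = (↑(-c θ) : EuclideanSpace ℝ (Fin (m+1)))
    rw [coe_neg_sphere]
    show Real.cos (θ + π) • E0 + Real.sin (θ + π) • E1 = -(Real.cos θ • E0 + Real.sin θ • E1)
    rw [Real.cos_add_pi, Real.sin_add_pi]
    module
  set g : ℝ → ℝ := fun θ => f (c θ) - f (c (θ + π/2)) with hg
  have hgc : Continuous g := by
    apply Continuous.sub (hf.comp hcc)
    exact hf.comp (hcc.comp (continuous_id.add continuous_const))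
  have hgneg : g π = -g 0 := by
    have e1 : c π = -c 0 := by rw [← hcneg 0, zero_add]
    have e2 : c (π + π/2) = -c (π/2) := by rw [← hcneg (π/2)]; ring_nf
    simp only [hg, e1, e2, hodd]
    ring
  have hpi : (0:ℝ) ≤ π := le_of_lt Real.pi_pos
  have : ∃ θ ∈ Set.Icc (0:ℝ) π, g θ = 0 := by
    rcases le_total (g 0) 0 with h | h
    · have h2 : (0:ℝ) ∈ Set.Icc (g 0) (g π) := ⟨h, by rw [hgneg]; linarith⟩
      obtain ⟨θ, hθ, hθ0⟩ := intermediate_value_Icc hpi hgc.continuousOn h2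
      exact ⟨θ, hθ, hθ0⟩
    · have h2 : (0:ℝ) ∈ Set.Icc (g π) (g 0) := ⟨by rw [hgneg]; linarith, h⟩
      obtain ⟨θ, hθ, hθ0⟩ := intermediate_value_Icc' hpi hgc.continuousOn h2
      exact ⟨θ, hθ, hθ0⟩
  obtain ⟨θ, -, hθ0⟩ := this
  have hiv : (inner ℝ (u θ) (u (θ + π/2)) : ℝ) = 0 := by
    rw [hinner]
    have : θ - (θ + π/2) = -(π/2) := by ring
    rw [this, Real.cos_neg, Real.cos_pi_div_two]
  refine ⟨c θ, c (θ + π/2), ?_, ?_, hiv, sub_eq_zero.mp hθ0⟩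
  · intro h
    have h' : u θ = u (θ + π/2) := congrArg Subtype.val h
    have h1 := hinner θ θ
    rw [sub_self, Real.cos_zero] at h1
    rw [h', ← h'] at hiv
    rw [hiv] at h1
    norm_num at h1
  · intro h
    have h' : u θ = -u (θ + π/2) := by
      have := congrArg Subtype.val h
      rwa [coe_neg_sphere] at this
    have h1 := hinner (θ + π/2) (θ + π/2)
    rw [sub_self, Real.cos_zero] at h1
    have h2 : (inner ℝ (u θ) (u (θ + π/2)) : ℝ) = -1 := by
      rw [h', inner_neg_left, h1]
    rw [hiv] at h2
    norm_num at h2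
end

section
/- Let f : S^1 → ℝ be a continuous odd map. Then there exist two orthogonal unit vectors p₁, p₂ ∈ S^1 such that f(p₁) = f(p₂). -/
noncomputable def rot2 (p : EuclideanSpace ℝ (Fin 2)) : EuclideanSpace ℝ (Fin 2) :=
  WithLp.toLp 2 ![-p 1, p 0]

lemma rot2_norm (p : EuclideanSpace ℝ (Fin 2)) : ‖rot2 p‖ = ‖p‖ := by
  simp only [rot2, EuclideanSpace.norm_eq, Fin.sum_univ_two]
  norm_num
  ring_nf

lemma rot2_inner (p : EuclideanSpace ℝ (Fin 2)) : (inner ℝ p (rot2 p) : ℝ) = 0 := by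
  simp only [rot2, PiLp.inner_apply, Fin.sum_univ_two, RCLike.inner_apply, conj_trivial]
  simp
  ring

lemma rot2_neg (p : EuclideanSpace ℝ (Fin 2)) : rot2 (-p) = -rot2 p := by
  ext i
  fin_cases i <;> simp [rot2]

lemma rot2_cont : Continuous rot2 := by
  apply (PiLp.continuous_toLp 2 _).comp
  apply continuous_pi
  intro i
  fin_cases i <;> simp only [rot2] <;>
    [exact (PiLp.continuous_apply 2 _ (1 : Fin 2)).neg; exact PiLp.continuous_apply 2 _ (0 : Fin 2)]

theorem stmt_7
    (f : Metric.sphere (0 : EuclideanSpace ℝ (Fin 2)) 1 → ℝ)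
    (hf : Continuous f) (hodd : ∀ p, f (-p) = -f p) :
    ∃ p₁ p₂ : Metric.sphere (0 : EuclideanSpace ℝ (Fin 2)) 1,
      (inner ℝ (p₁ : EuclideanSpace ℝ (Fin 2)) (p₂ : EuclideanSpace ℝ (Fin 2)) : ℝ) = 0 ∧
      f p₁ = f p₂ := by
  haveI : PreconnectedSpace (Metric.sphere (0 : EuclideanSpace ℝ (Fin 2)) 1) := by
    apply Subtype.preconnectedSpace
    apply (isConnected_sphere ?_ 0 (by norm_num : (0:ℝ) ≤ 1)).isPreconnected
    rw [← Module.finrank_eq_rank, finrank_euclideanSpace_fin]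
    exact_mod_cast one_lt_two
  have hmem : ∀ p : Metric.sphere (0 : EuclideanSpace ℝ (Fin 2)) 1,
      rot2 (p : EuclideanSpace ℝ (Fin 2)) ∈ Metric.sphere (0 : EuclideanSpace ℝ (Fin 2)) 1 := by
    intro p
    have := p.2
    simp only [mem_sphere_iff_norm, sub_zero] at this ⊢
    rw [rot2_norm, this]
  let R : Metric.sphere (0 : EuclideanSpace ℝ (Fin 2)) 1 →
      Metric.sphere (0 : EuclideanSpace ℝ (Fin 2)) 1 :=
    fun p => ⟨rot2 (p : EuclideanSpace ℝ (Fin 2)), hmem p⟩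
  have hRcont : Continuous R := by
    apply Continuous.subtype_mk
    exact rot2_cont.comp continuous_subtype_val
  have hRneg : ∀ p, R (-p) = -(R p) := by
    intro p
    apply Subtype.ext
    show rot2 ((-p : Metric.sphere _ 1) : EuclideanSpace ℝ (Fin 2)) = _
    rw [show ((-p : Metric.sphere _ 1) : EuclideanSpace ℝ (Fin 2)) = -(p : EuclideanSpace ℝ (Fin 2)) from rfl]
    rw [rot2_neg]
    rfl
  let g : Metric.sphere (0 : EuclideanSpace ℝ (Fin 2)) 1 → ℝ := fun p => f p - f (R p)
  have hgcont : Continuous g := hf.sub (hf.comp hRcont)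
  have hgneg : ∀ p, g (-p) = -g p := by
    intro p
    simp only [g, hRneg, hodd]
    ring
  let p0 : Metric.sphere (0 : EuclideanSpace ℝ (Fin 2)) 1 :=
    ⟨EuclideanSpace.single 0 (1:ℝ), by simp⟩
  have hex : ∃ x, g x = 0 := by
    rcases le_total (g p0) 0 with h | h
    · have h2 : (0:ℝ) ≤ g (-p0) := by rw [hgneg]; linarith
      obtain ⟨x, hx⟩ := intermediate_value_univ₂ hgcont continuous_const h h2
      exact ⟨x, hx⟩
    · have h2 : g (-p0) ≤ 0 := by rw [hgneg]; linarith
      obtain ⟨x, hx⟩ := intermediate_value_univ₂ hgcont continuous_const h2 h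
      exact ⟨x, hx⟩
  obtain ⟨x, hx⟩ := hex
  refine ⟨x, R x, rot2_inner _, ?_⟩
  have : f x - f (R x) = 0 := hx
  linarith
end

section
/- For every continuous map f : S^2 → ℝ, there exist two distinct non-antipodal points p₁, p₂ ∈ S^2 (p₁ ≠ ±p₂) with f(p₁) = f(p₂), and also a point p₀ with f(p₀) = f(-p₀). -/
open Real Set

noncomputable def pt (x y z : ℝ) : EuclideanSpace ℝ (Fin 3) := WithLp.toLp 2 ![x,y,z]

private lemma memS (x y z : ℝ) (h : x^2 + y^2 + z^2 = 1) :
    pt x y z ∈ Metric.sphere (0 : EuclideanSpace ℝ (Fin 3)) 1 := by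
  rw [mem_sphere_zero_iff_norm, EuclideanSpace.norm_eq]
  simp [pt, Fin.sum_univ_three, sq_abs, ← sq, h]

private lemma contS {g h k : ℝ → ℝ} (hg : Continuous g) (hh : Continuous h) (hk : Continuous k) :
    Continuous (fun t => pt (g t) (h t) (k t)) := by
  apply (PiLp.continuous_toLp 2 _).comp
  apply continuous_pi
  intro i
  fin_cases i <;> simpa [pt]

private lemma med (x y z : ℝ) : z ∈ uIcc x y ∨ y ∈ uIcc x z ∨ x ∈ uIcc y z := by
  rcases le_total x y with h1 | h1 <;> rcases le_total y z with h2 | h2 <;>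
    rcases le_total x z with h3 | h3 <;> simp [Set.mem_uIcc] <;> tauto

private lemma key (f : Metric.sphere (0 : EuclideanSpace ℝ (Fin 3)) 1 → ℝ)
    (hf : Continuous f) (γ : ℝ → Metric.sphere (0 : EuclideanSpace ℝ (Fin 3)) 1)
    (hγ : Continuous γ) (c : Metric.sphere (0 : EuclideanSpace ℝ (Fin 3)) 1)
    (hne : ∀ t, ((γ t : EuclideanSpace ℝ (Fin 3)) ≠ c ∧ (γ t : EuclideanSpace ℝ (Fin 3)) ≠ -(c : EuclideanSpace ℝ (Fin 3))))
    (s u : ℝ) (hmem : f c ∈ uIcc (f (γ s)) (f (γ u))) :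
    ∃ p₁ p₂ : Metric.sphere (0 : EuclideanSpace ℝ (Fin 3)) 1,
      p₁ ≠ p₂ ∧ p₁ ≠ -p₂ ∧ f p₁ = f p₂ := by
  have h := intermediate_value_uIcc (f := f ∘ γ) (a := s) (b := u)
    ((hf.comp hγ).continuousOn)
  obtain ⟨t, -, ht⟩ := h hmem
  refine ⟨γ t, c, ?_, ?_, ht⟩
  · intro h; exact (hne t).1 (congrArg Subtype.val h)
  · intro h
    apply (hne t).2
    have := congrArg Subtype.val h
    rwa [coe_neg_sphere] at this

theorem stmt_16
    (f : Metric.sphere (0 : EuclideanSpace ℝ (Fin 3)) 1 → ℝ)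
    (hf : Continuous f) :
    (∃ p₁ p₂ : Metric.sphere (0 : EuclideanSpace ℝ (Fin 3)) 1,
      p₁ ≠ p₂ ∧ p₁ ≠ -p₂ ∧ f p₁ = f p₂) ∧
    (∃ p₀ : Metric.sphere (0 : EuclideanSpace ℝ (Fin 3)) 1, f p₀ = f (-p₀)) := by
  let A : Metric.sphere (0 : EuclideanSpace ℝ (Fin 3)) 1 := ⟨pt 1 0 0, memS 1 0 0 (by norm_num)⟩
  let B : Metric.sphere (0 : EuclideanSpace ℝ (Fin 3)) 1 := ⟨pt 0 1 0, memS 0 1 0 (by norm_num)⟩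
  let C : Metric.sphere (0 : EuclideanSpace ℝ (Fin 3)) 1 := ⟨pt 0 0 1, memS 0 0 1 (by norm_num)⟩
  have hsq : ∀ t : ℝ, cos t ^ 2 + sin t ^ 2 + 0 ^ 2 = 1 := fun t => by
    simp [cos_sq_add_sin_sq t]
  let γC : ℝ → Metric.sphere (0 : EuclideanSpace ℝ (Fin 3)) 1 := fun t => ⟨pt (cos t) (sin t) 0, memS _ _ _ (hsq t)⟩
  let γB : ℝ → Metric.sphere (0 : EuclideanSpace ℝ (Fin 3)) 1 := fun t => ⟨pt (cos t) 0 (sin t), memS _ _ _ (by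
    have := cos_sq_add_sin_sq t; ring_nf; ring_nf at this; linarith)⟩
  let γA : ℝ → Metric.sphere (0 : EuclideanSpace ℝ (Fin 3)) 1 := fun t => ⟨pt 0 (cos t) (sin t), memS _ _ _ (by
    have := cos_sq_add_sin_sq t; ring_nf; ring_nf at this; linarith)⟩
  have hγC : Continuous γC :=
    (contS continuous_cos continuous_sin continuous_const).subtype_mk _
  have hγB : Continuous γB :=
    (contS continuous_cos continuous_const continuous_sin).subtype_mk _
  have hγA : Continuous γA :=
    (contS continuous_const continuous_cos continuous_sin).subtype_mk _
  have hC0 : γC 0 = A := by apply Subtype.ext; simp [γC, A, pt]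
  have hC1 : γC (π/2) = B := by apply Subtype.ext; simp [γC, B, pt]
  have hB0 : γB 0 = A := by apply Subtype.ext; simp [γB, A, pt]
  have hB1 : γB (π/2) = C := by apply Subtype.ext; simp [γB, C, pt]
  have hA0 : γA 0 = B := by apply Subtype.ext; simp [γA, B, pt]
  have hA1 : γA (π/2) = C := by apply Subtype.ext; simp [γA, C, pt]
  have hneC : ∀ t, ((γC t : EuclideanSpace ℝ (Fin 3)) ≠ C ∧ (γC t : EuclideanSpace ℝ (Fin 3)) ≠ -(C : EuclideanSpace ℝ (Fin 3))) := by
    intro t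
    constructor <;> intro h <;> have := congrArg (fun v : EuclideanSpace ℝ (Fin 3) => v 2) h <;> simp [γC, C, pt] at this
  have hneB : ∀ t, ((γB t : EuclideanSpace ℝ (Fin 3)) ≠ B ∧ (γB t : EuclideanSpace ℝ (Fin 3)) ≠ -(B : EuclideanSpace ℝ (Fin 3))) := by
    intro t
    constructor <;> intro h <;> have := congrArg (fun v : EuclideanSpace ℝ (Fin 3) => v 1) h <;> simp [γB, B, pt] at this
  have hneA : ∀ t, ((γA t : EuclideanSpace ℝ (Fin 3)) ≠ A ∧ (γA t : EuclideanSpace ℝ (Fin 3)) ≠ -(A : EuclideanSpace ℝ (Fin 3))) := by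
    intro t
    constructor <;> intro h <;> have := congrArg (fun v : EuclideanSpace ℝ (Fin 3) => v 0) h <;> simp [γA, A, pt] at this
  constructor
  · rcases med (f A) (f B) (f C) with h | h | h
    · exact key f hf γC hγC C hneC 0 (π/2) (by rwa [hC0, hC1])
    · exact key f hf γB hγB B hneB 0 (π/2) (by rwa [hB0, hB1])
    · exact key f hf γA hγA A hneA 0 (π/2) (by rwa [hA0, hA1])
  · -- antipodal part
    have hCpi : γC π = -A := by
      apply Subtype.ext
      rw [coe_neg_sphere]
      ext i
      fin_cases i <;> simp [γC, A, pt]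
    set g : ℝ → ℝ := fun t => f (γC t) - f (-(γC t)) with hg
    have hgc : Continuous g := (hf.comp hγC).sub (hf.comp (continuous_neg.comp hγC))
    have hgpi : g π = -(g 0) := by
      simp only [hg, hC0, hCpi, neg_neg]
      ring
    have h0 : (0:ℝ) ∈ uIcc (g 0) (g π) := by
      rw [hgpi, Set.mem_uIcc]
      rcases le_total 0 (g 0) with h | h
      · right; constructor <;> linarith
      · left; constructor <;> linarith
    obtain ⟨t, -, ht⟩ := intermediate_value_uIcc (f := g) (a := 0) (b := π)
      hgc.continuousOn h0
    exact ⟨γC t, by have : f (γC t) - f (-(γC t)) = 0 := ht; linarith⟩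
end
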